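/- Let (T_t)_{t ≥ 0} be a diskcyclic strongly continuous semigroup of operators on an infinite-dimensional complex Banach space X, and let x ∈ X be a diskcyclic vector for (T_t)_{t ≥ 0}. Then: (1) T_t x ≠ 0 for all t ≥ 0; and (2) for every s ≥ 0, the set {α T_t x : t ≥ s, α ∈ 𝔻} is dense in X. -/

import Mathlib

/-!
Riesz's theorem makes every compact subset of an infinite-dimensional space nowhere dense.
The part `{α • T t x : ‖α‖ ≤ 1, t ≤ s}` of the disk orbit is the continuous image of the compact
set `𝔻 × [0, s]`, so removing it from a dense set leaves a dense set: this is the density of the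
tails. If `T t₀ x = 0`, the tail beyond `t₀` is `{0}`, which is not dense in a nonzero space.
-/

open Set
open scoped NNReal

theorem IsCompact.interior_eq_empty_of_not_finiteDimensional (𝕜 : Type*)
    [NontriviallyNormedField 𝕜] [CompleteSpace 𝕜] {E : Type*} [AddCommGroup E] [Module 𝕜 E]
    [TopologicalSpace E] [T2Space E] [IsTopologicalAddGroup E] [ContinuousSMul 𝕜 E]
    (hE : ¬ FiniteDimensional 𝕜 E) {K : Set E} (hK : IsCompact K) : interior K = ∅ := by
  by_contra hint
  obtain ⟨x, hx⟩ := nonempty_iff_ne_empty.2 hint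
  have := hK.locallyCompactSpace_of_mem_nhds_of_addGroup (mem_interior_iff_mem_nhds.1 hx)
  exact hE (FiniteDimensional.of_locallyCompactSpace 𝕜)

theorem Dense.of_union_isNowhereDense_left {X : Type*} [TopologicalSpace X] {s t : Set X}
    (hst : Dense (s ∪ t)) (hs : IsNowhereDense s) : Dense t := by
  have hcompl : (closure s)ᶜ ⊆ closure t := fun y hy ↦ by
    have hy' : y ∈ closure (s ∪ t) := hst y
    rw [closure_union] at hy'
    exact hy'.resolve_left hy
  exact (interior_eq_empty_iff_dense_compl.1 hs).mono hcompl |>.of_closure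

theorem Dense.subsingleton_of_singleton {X : Type*} [TopologicalSpace X] [T1Space X] {x : X}
    (h : Dense ({x} : Set X)) : Subsingleton X := by
  rw [← subsingleton_univ_iff, ← h.closure_eq, closure_singleton]
  exact subsingleton_singleton

section DiskOrbit

variable {ι X : Type*}

def diskOrbit (𝕜 : Type*) [Norm 𝕜] [SMul 𝕜 X] (f : ι → X) (S : Set ι) : Set X :=
  {y | ∃ α : 𝕜, ‖α‖ ≤ 1 ∧ ∃ t ∈ S, y = α • f t}

section Norm

variable {𝕜 : Type*} [Norm 𝕜] [SMul 𝕜 X]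

theorem diskOrbit_univ (f : ι → X) :
    diskOrbit 𝕜 f univ = {y | ∃ α : 𝕜, ‖α‖ ≤ 1 ∧ ∃ t, y = α • f t} := by
  simp [diskOrbit]

theorem diskOrbit_union (f : ι → X) (S S' : Set ι) :
    diskOrbit 𝕜 f (S ∪ S') = diskOrbit 𝕜 f S ∪ diskOrbit 𝕜 f S' := by
  ext y
  simp only [diskOrbit, mem_union, mem_ofPred_eq, or_and_right, exists_or,
    ← exists_and_left, and_or_left]

end Norm

theorem diskOrbit_eq_image {𝕜 : Type*} [SeminormedAddGroup 𝕜] [SMul 𝕜 X] (f : ι → X)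
    (S : Set ι) :
    diskOrbit 𝕜 f S = (fun p : 𝕜 × ι ↦ p.1 • f p.2) '' (Metric.closedBall 0 1 ×ˢ S) := by
  ext y
  simp [diskOrbit, eq_comm, and_assoc]

theorem IsCompact.diskOrbit {𝕜 : Type*} [NormedField 𝕜] [ProperSpace 𝕜] [AddCommGroup X]
    [Module 𝕜 X] [TopologicalSpace ι] [TopologicalSpace X] [ContinuousSMul 𝕜 X]
    {f : ι → X} {S : Set ι} (hS : IsCompact S) (hf : ContinuousOn f S) :
    IsCompact (diskOrbit 𝕜 f S) := by
  rw [diskOrbit_eq_image]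
  exact ((isCompact_closedBall 0 1).prod hS).image_of_continuousOn
    (continuousOn_fst.smul (hf.comp continuousOn_snd fun _ hp ↦ hp.2))

theorem Dense.diskOrbit_Ici {𝕜 : Type*} [NontriviallyNormedField 𝕜] [CompleteSpace 𝕜]
    [ProperSpace 𝕜] [AddCommGroup X] [Module 𝕜 X] [TopologicalSpace X] [T2Space X]
    [IsTopologicalAddGroup X] [ContinuousSMul 𝕜 X]
    [TopologicalSpace ι] [LinearOrder ι] [OrderBot ι] [CompactIccSpace ι]
    (hX : ¬ FiniteDimensional 𝕜 X) {f : ι → X} (hf : Continuous f)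
    (hdense : Dense (diskOrbit 𝕜 f univ)) (s : ι) : Dense (diskOrbit 𝕜 f (Ici s)) := by
  have hhead : IsCompact (diskOrbit 𝕜 f (Iic s)) :=
    (Icc_bot (a := s) ▸ isCompact_Icc).diskOrbit hf.continuousOn
  refine Dense.of_union_isNowhereDense_left (s := diskOrbit 𝕜 f (Iic s)) ?_ ?_
  · rwa [← diskOrbit_union, Iic_union_Ici]
  · rw [hhead.isClosed.isNowhereDense_iff]
    exact hhead.interior_eq_empty_of_not_finiteDimensional 𝕜 hX

end DiskOrbit

theorem semigroup_apply_eq_zero_of_le {R X : Type*} [Semiring R] [TopologicalSpace X]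
    [AddCommMonoid X] [Module R X] {T : ℝ≥0 → X →L[R] X}
    (hTadd : ∀ t s : ℝ≥0, T (t + s) = T t ∘L T s) {x : X} {t₀ t : ℝ≥0} (h₀ : T t₀ x = 0)
    (ht : t₀ ≤ t) : T t x = 0 := by
  rw [← tsub_add_cancel_of_le ht, hTadd, ContinuousLinearMap.comp_apply, h₀, map_zero]

theorem stmt_13_general {X : Type*} [NormedAddCommGroup X] [NormedSpace ℂ X]
    (hinf : ¬ FiniteDimensional ℂ X)
    (T : ℝ≥0 → X →L[ℂ] X)
    (hTadd : ∀ t s : ℝ≥0, T (t + s) = T t ∘L T s)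
    (hTcont : ∀ x : X, Continuous fun t : ℝ≥0 => T t x)
    (x : X) (hx : Dense {y : X | ∃ α : ℂ, ‖α‖ ≤ 1 ∧ ∃ t : ℝ≥0, y = α • T t x}) :
    (∀ t : ℝ≥0, T t x ≠ 0) ∧
    ∀ s : ℝ≥0, Dense {y : X | ∃ α : ℂ, ‖α‖ ≤ 1 ∧ ∃ t : ℝ≥0, s ≤ t ∧ y = α • T t x} := by
  rw [← diskOrbit_univ] at hx
  have htail (s : ℝ≥0) : Dense (diskOrbit ℂ (fun t ↦ T t x) (Ici s)) :=
    hx.diskOrbit_Ici hinf (hTcont x) s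
  refine ⟨fun t₀ h₀ ↦ hinf ?_, htail⟩
  have hzero : diskOrbit ℂ (fun t ↦ T t x) (Ici t₀) ⊆ {0} := by
    rintro _ ⟨α, -, t, ht, rfl⟩
    simp [semigroup_apply_eq_zero_of_le hTadd h₀ ht]
  have : Subsingleton X := ((htail t₀).mono hzero).subsingleton_of_singleton
  infer_instance

/-- If `x` is a diskcyclic vector for a strongly continuous semigroup `(T t)` on an
infinite-dimensional complex Banach space, then `T t x ≠ 0` for all `t ≥ 0`, and for
every `s ≥ 0` the set `{α • T t x : α ∈ 𝔻, t ≥ s}` is dense. -/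
theorem stmt_13 {X : Type*} [NormedAddCommGroup X] [NormedSpace ℂ X] [CompleteSpace X]
    (hinf : ¬ FiniteDimensional ℂ X)
    (T : ℝ≥0 → X →L[ℂ] X)
    (hT0 : T 0 = ContinuousLinearMap.id ℂ X)
    (hTadd : ∀ t s : ℝ≥0, T (t + s) = T t ∘L T s)
    (hTcont : ∀ x : X, Continuous fun t : ℝ≥0 => T t x)
    (x : X) (hx : Dense {y : X | ∃ α : ℂ, ‖α‖ ≤ 1 ∧ ∃ t : ℝ≥0, y = α • T t x}) :
    (∀ t : ℝ≥0, T t x ≠ 0) ∧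
    ∀ s : ℝ≥0, Dense {y : X | ∃ α : ℂ, ‖α‖ ≤ 1 ∧ ∃ t : ℝ≥0, s ≤ t ∧ y = α • T t x} :=
  stmt_13_general hinf T hTadd hTcont x hx
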